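/- arXiv:2310.10816 — 5 statements merged into one kernel-verified Lean document; each statement's English description precedes it below -/
import Mathlib

section
/- For any triangle in the Euclidean plane with circumradius R, inradius r, and distance d between circumcenter and incenter, we have R^2 - 2Rr = d^2 (Euler's formula). -/
/-!
Let `w` be the barycentric weights of the incenter and `hᵢ` the heights. The incenter lies at
signed distance `wᵢ hᵢ = r` from side `i`, and the law of sines gives `2R hᵢ` = the product of
the two sides at vertex `i`; hence `wᵢ = 2Rr aᵢ / (abc)`, and `Σ wᵢ = 1` reads
`2Rr (a + b + c) = abc`. Leibniz's formula `|OI|² = R² - Σ_{i<j} wᵢ wⱼ |PᵢPⱼ|²` then gives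
`R² - 2Rr`. A point of the closed triangle has nonnegative signed distances to the side lines,
so the hypotheses make `I` the incenter and `r` the inradius.
-/

open EuclideanGeometry Affine
open scoped RealInnerProductSpace

section

variable {V P : Type*} [NormedAddCommGroup V] [InnerProductSpace ℝ V] [MetricSpace P]
  [NormedAddTorsor V P]

theorem dist_affineCombination_sq {ι : Type*} (s : Finset ι) (p : ι → P) {w : ι → ℝ}
    (hw : ∑ i ∈ s, w i = 1) (q : P) :
    dist (s.affineCombination ℝ p w) q ^ 2 =
      ∑ i ∈ s, w i * dist (p i) q ^ 2 -
        (∑ i ∈ s, ∑ j ∈ s, w i * w j * dist (p i) (p j) ^ 2) / 2 := by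
  have hpair : ∀ i j, dist (p i) (p j) ^ 2 =
      ‖p i -ᵥ q‖ ^ 2 - 2 * ⟪p i -ᵥ q, p j -ᵥ q⟫ + ‖p j -ᵥ q‖ ^ 2 := fun i j => by
    rw [dist_eq_norm_vsub V, ← vsub_sub_vsub_cancel_right (p i) (p j) q, norm_sub_sq_real]
  have hleft : ∀ f : ι → ℝ, ∑ i ∈ s, ∑ j ∈ s, w i * w j * f i = ∑ i ∈ s, w i * f i := fun f =>
    Finset.sum_congr rfl fun i _ => by rw [← Finset.sum_mul, ← Finset.mul_sum, hw, mul_one]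
  have hright : ∀ f : ι → ℝ, ∑ i ∈ s, ∑ j ∈ s, w i * w j * f j = ∑ j ∈ s, w j * f j :=
    fun f => by rw [Finset.sum_comm]; simp_rw [mul_comm (w _) (w _)]; exact hleft f
  have hcross : ∑ i ∈ s, ∑ j ∈ s, w i * w j * (2 * ⟪p i -ᵥ q, p j -ᵥ q⟫) =
      2 * ∑ i ∈ s, ∑ j ∈ s, w i * (w j * ⟪p i -ᵥ q, p j -ᵥ q⟫) := by
    simp_rw [Finset.mul_sum]; ring_nf
  rw [s.affineCombination_eq_weightedVSubOfPoint_vadd_of_sum_eq_one w p hw q,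
    dist_vadd_left, s.weightedVSubOfPoint_apply, ← real_inner_self_eq_norm_sq, sum_inner]
  simp_rw [inner_sum, real_inner_smul_left, real_inner_smul_right, hpair, dist_eq_norm_vsub V _ q,
    mul_add, mul_sub, Finset.sum_add_distrib, Finset.sum_sub_distrib, hleft, hright, hcross]
  ring

theorem dist_eq_dist_mul_sin_angle_of_mem_affineSpan_pair {p a b f : P} (hab : a ≠ b)
    (hf : f ∈ line[ℝ, a, b]) (hperp : ⟪b -ᵥ a, p -ᵥ f⟫ = 0) :
    dist p f = dist p a * Real.sin (∠ p a b) := by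
  have hfa : f -ᵥ a ∈ vectorSpan ℝ {a, b} := by
    rw [← direction_affineSpan]
    exact AffineSubspace.vsub_mem_direction hf (left_mem_affineSpan_pair ℝ a b)
  obtain ⟨t, ht⟩ := mem_vectorSpan_pair_rev.1 hfa
  set u := b -ᵥ a
  set x := p -ᵥ f
  have hv : p -ᵥ a = x + t • u := by rw [ht, vsub_add_vsub_cancel]
  have hxu : ⟪x, u⟫ = 0 := by rw [real_inner_comm]; exact hperp
  have hgram : ⟪p -ᵥ a, p -ᵥ a⟫ * ⟪u, u⟫ - ⟪p -ᵥ a, u⟫ * ⟪p -ᵥ a, u⟫ = (‖x‖ * ‖u‖) ^ 2 := by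
    rw [hv]
    simp only [inner_add_left, inner_add_right, real_inner_smul_left, real_inner_smul_right, hxu,
      hperp]
    simp only [real_inner_self_eq_norm_sq]
    ring
  have hsin := InnerProductGeometry.sin_angle_mul_norm_mul_norm (p -ᵥ a) u
  rw [hgram, Real.sqrt_sq (by positivity)] at hsin
  have hu : ‖u‖ ≠ 0 := norm_ne_zero_iff.2 (vsub_ne_zero.2 hab.symm)
  rw [dist_eq_norm_vsub V, dist_eq_norm_vsub V p a, EuclideanGeometry.angle]
  refine mul_right_cancel₀ hu ?_
  rw [← hsin]; ring

namespace Affine.Simplex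

theorem signedInfDist_affineCombination_eq_mul_height {n : ℕ} [NeZero n] (s : Simplex ℝ P n)
    {w : Fin (n + 1) → ℝ} (hw : ∑ i, w i = 1) (i : Fin (n + 1)) :
    s.signedInfDist i (Finset.univ.affineCombination ℝ s.points w) = w i * s.height i := by
  rw [s.signedInfDist_affineCombination i hw, height, dist_eq_norm_vsub V, altitudeFoot]

end Affine.Simplex

namespace Affine.Triangle

variable (t : Triangle ℝ P)

theorem height_eq_dist_mul_sin_angle {i j k : Fin 3} (hij : i ≠ j) (hik : i ≠ k) (hjk : j ≠ k) :
    t.height i =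
      dist (t.points i) (t.points j) * Real.sin (∠ (t.points i) (t.points j) (t.points k)) := by
  have hface : t.points '' {i}ᶜ = {t.points j, t.points k} := by
    rw [← Set.image_pair]; congr 1; ext x
    simp only [Set.mem_compl_iff, Set.mem_singleton_iff, Set.mem_insert_iff]
    omega
  refine dist_eq_dist_mul_sin_angle_of_mem_affineSpan_pair (t.independent.injective.ne hjk) ?_ ?_
  · rw [← hface]; exact t.altitudeFoot_mem_affineSpan_image_compl i
  · rw [← vsub_sub_vsub_cancel_right _ _ (t.altitudeFoot i), inner_sub_left,
      t.inner_vsub_altitudeFoot_vsub_altitudeFoot_eq_zero hik,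
      t.inner_vsub_altitudeFoot_vsub_altitudeFoot_eq_zero hij, sub_zero]

theorem height_mul_two_mul_circumradius {i j k : Fin 3} (hij : i ≠ j) (hik : i ≠ k)
    (hjk : j ≠ k) :
    t.height i * (2 * t.circumradius) =
      dist (t.points i) (t.points j) * dist (t.points i) (t.points k) := by
  have hsin : Real.sin (∠ (t.points i) (t.points j) (t.points k)) ≠ 0 := fun h0 => by
    simpa [t.height_eq_dist_mul_sin_angle hij hik hjk, h0] using t.height_pos i
  rw [t.height_eq_dist_mul_sin_angle hij hik hjk,
    ← t.dist_div_sin_angle_eq_two_mul_circumradius hij hik hjk]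
  field_simp

theorem dist_affineCombination_circumcenter_sq {w : Fin 3 → ℝ} (hw : ∑ i, w i = 1) :
    dist (Finset.univ.affineCombination ℝ t.points w) t.circumcenter ^ 2 =
      t.circumradius ^ 2 - (w 0 * w 1 * dist (t.points 0) (t.points 1) ^ 2 +
        w 0 * w 2 * dist (t.points 0) (t.points 2) ^ 2 +
        w 1 * w 2 * dist (t.points 1) (t.points 2) ^ 2) := by
  rw [dist_affineCombination_sq Finset.univ t.points hw t.circumcenter]
  simp only [Simplex.dist_circumcenter_eq_circumradius, ← Finset.sum_mul, hw, one_mul,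
    Nat.reduceAdd, Fin.sum_univ_three, dist_self, dist_comm (t.points 1) (t.points 0),
    dist_comm (t.points 2) (t.points 0), dist_comm (t.points 2) (t.points 1)]
  ring

theorem dist_circumcenter_incenter_sq :
    dist t.circumcenter t.incenter ^ 2 =
      t.circumradius ^ 2 - 2 * t.circumradius * t.inradius := by
  set w := t.excenterWeights ∅
  set R := t.circumradius
  set r := t.inradius
  have hw : ∑ i, w i = 1 := t.excenterExists_empty.sum_excenterWeights_eq_one
  have hK : ∀ {i j k : Fin 3}, i ≠ j → i ≠ k → j ≠ k →
      w i * (dist (t.points i) (t.points j) * dist (t.points i) (t.points k)) = 2 * R * r := by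
    intro i j k hij hik hjk
    have hwh : w i * t.height i = r := by
      rw [← t.signedInfDist_affineCombination_eq_mul_height hw, ← t.incenter_eq_affineCombination,
        t.signedInfDist_incenter]
    linear_combination (-w i) * t.height_mul_two_mul_circumradius hij hik hjk + 2 * R * hwh
  set a := dist (t.points 1) (t.points 2)
  set b := dist (t.points 0) (t.points 2)
  set c := dist (t.points 0) (t.points 1)
  have hK0 : w 0 * (c * b) = 2 * R * r := hK (by decide) (by decide) (by decide)
  have hK1 : w 1 * (c * a) = 2 * R * r := by
    simpa only [dist_comm (t.points 1) (t.points 0)] using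
      hK (i := 1) (j := 0) (k := 2) (by decide) (by decide) (by decide)
  have hK2 : w 2 * (b * a) = 2 * R * r := by
    simpa only [dist_comm (t.points 2) (t.points 0), dist_comm (t.points 2) (t.points 1)] using
      hK (i := 2) (j := 0) (k := 1) (by decide) (by decide) (by decide)
  have hperim : 2 * R * r * (a + b + c) = a * b * c := by
    have hw3 : w 0 + w 1 + w 2 = 1 := by simpa [Fin.sum_univ_three] using hw
    linear_combination (-a) * hK0 - b * hK1 - c * hK2 + a * b * c * hw3
  have habc : a * b * c ≠ 0 := by
    have hinj := t.independent.injective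
    simp only [a, b, c, ne_eq, mul_eq_zero, dist_eq_zero, not_or]
    exact ⟨⟨hinj.ne (by decide), hinj.ne (by decide)⟩, hinj.ne (by decide)⟩
  -- times `abc`, the Leibniz sum is `c K₀ K₁ + a K₁ K₂ + b K₀ K₂` with `Kᵢ` the left sides of `hKᵢ`
  have hpairs : (w 0 * w 1 * c ^ 2 + w 0 * w 2 * b ^ 2 + w 1 * w 2 * a ^ 2) * (a * b * c) =
      2 * R * r * (a * b * c) := by
    linear_combination c * (w 1 * (c * a)) * hK0 + c * (2 * R * r) * hK1
      + a * (w 2 * (b * a)) * hK1 + a * (2 * R * r) * hK2 + b * (w 2 * (b * a)) * hK0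
      + b * (2 * R * r) * hK2 + 2 * R * r * hperim
  rw [dist_comm, t.incenter_eq_affineCombination, t.dist_affineCombination_circumcenter_sq hw,
    mul_right_cancel₀ habc hpairs]

end Affine.Triangle

end

theorem Affine.Simplex.signedInfDist_eq_infDist_of_mem_convexHull {E : Type*}
    [NormedAddCommGroup E] [InnerProductSpace ℝ E] {n : ℕ} [NeZero n] (s : Simplex ℝ E n)
    {p : E} (hp : p ∈ convexHull ℝ (Set.range s.points)) (i : Fin (n + 1)) :
    s.signedInfDist i p = Metric.infDist p (affineSpan ℝ (s.points '' {i}ᶜ)) := by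
  have hnonneg : 0 ≤ s.signedInfDist i p := by
    refine convexHull_min ?_ ((convex_Ici 0).affine_preimage (s.signedInfDist i).toAffineMap) hp
    rintro _ ⟨j, rfl⟩
    rcases eq_or_ne j i with rfl | hji
    · simp [s.signedInfDist_apply_self]
    · simp [s.signedInfDist_apply_of_ne hji]
  rw [← abs_of_nonneg hnonneg,
    s.abs_signedInfDist_eq_dist_of_mem_affineSpan_range i (convexHull_subset_affineSpan _ hp),
    orthogonalProjectionSpan, dist_orthogonalProjection_eq_infDist, range_faceOpposite_points]

theorem euler_triangle_formula_general
    (T : Affine.Simplex ℝ (EuclideanSpace ℝ (Fin 2)) 2)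
    (I : EuclideanSpace ℝ (Fin 2)) (r : ℝ)
    (hI : I ∈ convexHull ℝ (Set.range T.points))
    (hdist : ∀ i : Fin 3,
      Metric.infDist I (affineSpan ℝ (T.points '' {j | j ≠ i}) : Set (EuclideanSpace ℝ (Fin 2))) = r) :
    T.circumradius ^ 2 - 2 * T.circumradius * r = dist T.circumcenter I ^ 2 := by
  have hsigned : ∀ i, T.signedInfDist i I = r := fun i =>
    (T.signedInfDist_eq_infDist_of_mem_convexHull hI i).trans (hdist i)
  have hI_eq : I = T.incenter :=
    (T.exists_forall_signedInfDist_eq_iff_eq_incenter (convexHull_subset_affineSpan _ hI)).1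
      ⟨r, hsigned⟩
  have hr_eq : r = T.inradius := by rw [← hsigned 0, hI_eq, T.signedInfDist_incenter]
  rw [hI_eq, hr_eq, Affine.Triangle.dist_circumcenter_incenter_sq]

/-- Euler's formula: for a triangle with circumradius `R`, inradius `r`, and distance `d`
between circumcenter and incenter, `R^2 - 2Rr = d^2`. The incenter `I` with inradius `r` is
characterized as a point inside the triangle at distance `r` from each side line. -/
theorem euler_triangle_formula
    (T : Affine.Simplex ℝ (EuclideanSpace ℝ (Fin 2)) 2)
    (I : EuclideanSpace ℝ (Fin 2)) (r : ℝ) (hr : 0 < r)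
    (hI : I ∈ convexHull ℝ (Set.range T.points))
    (hdist : ∀ i : Fin 3,
      Metric.infDist I (affineSpan ℝ (T.points '' {j | j ≠ i}) : Set (EuclideanSpace ℝ (Fin 2))) = r) :
    T.circumradius ^ 2 - 2 * T.circumradius * r = dist T.circumcenter I ^ 2 :=
  euler_triangle_formula_general T I r hI hdist
end

section
/- Let X, Y, Z, T be reals satisfying X - T > |Z - Y| > 0, X + T > |Z + Y| > 0, and XT - ZY > 0. Then there exist reals K, L, t, s such that the 2x2 matrix [[X, Y], [Z, T]] equals [[cosh t, sinh t],[sinh t, cosh t]] * [[K, 0],[0, L]] * [[cosh s, sinh s],[sinh s, cosh s]], with K - L = sqrt((X-T)^2 - (Z-Y)^2) and K > L > 0 (Lorentz singular value decomposition). -/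
/-!
Write `H t` for the hyperbolic rotation `!![cosh t, sinh t; sinh t, cosh t]`. In the light-cone
coordinates `X ± T`, `Z ± Y` the product `H t * diag K L * H s` has the components
`(K + L) (cosh (t + s), sinh (t + s))` and `(K - L) (cosh (t - s), sinh (t - s))`. So it suffices to
write the two vectors `(X + T, Z + Y)` and `(X - T, Z - Y)`, which lie inside the forward light
cone, in hyperbolic polar coordinates: `(a, b) = √(a² - b²) (cosh u, sinh u)`. The condition
`L > 0` becomes `(X - T)² - (Z - Y)² < (X + T)² - (Z + Y)²`, i.e. `X T - Z Y > 0`.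
-/

open Real Matrix

theorem exists_eq_mul_cosh_and_eq_mul_sinh {a b : ℝ} (h : |b| < a) :
    ∃ u : ℝ, a = √(a ^ 2 - b ^ 2) * cosh u ∧ b = √(a ^ 2 - b ^ 2) * sinh u := by
  have hsq : b ^ 2 < a ^ 2 := sq_lt_sq.mpr (h.trans_le (le_abs_self a))
  set r := √(a ^ 2 - b ^ 2)
  have hr : 0 < r := sqrt_pos.mpr (by linarith)
  have hr2 : r ^ 2 = a ^ 2 - b ^ 2 := sq_sqrt (by linarith)
  refine ⟨arsinh (b / r), ?_, by rw [sinh_arsinh]; field_simp⟩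
  have hcosh_sq : 1 + (b / r) ^ 2 = (a / r) ^ 2 := by field_simp; linarith
  rw [cosh_arsinh, hcosh_sq, sqrt_sq (div_nonneg ((abs_nonneg b).trans h.le) hr.le)]
  field_simp

theorem hyperbolicRotation_mul_diagonal_mul_hyperbolicRotation (K L t s : ℝ) :
    !![cosh t, sinh t; sinh t, cosh t] * !![K, 0; 0, L] * !![cosh s, sinh s; sinh s, cosh s] =
      !![((K + L) * cosh (t + s) + (K - L) * cosh (t - s)) / 2,
          ((K + L) * sinh (t + s) - (K - L) * sinh (t - s)) / 2;
        ((K + L) * sinh (t + s) + (K - L) * sinh (t - s)) / 2,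
          ((K + L) * cosh (t + s) - (K - L) * cosh (t - s)) / 2] := by
  simp only [cosh_add, cosh_sub, sinh_add, sinh_sub, Matrix.mul_fin_two]
  ext i j
  fin_cases i <;> fin_cases j <;>
    simp only [mul_zero, add_zero, zero_add, Fin.zero_eta, Fin.mk_one, Fin.isValue, of_apply,
      cons_val', cons_val_zero, cons_val_one, cons_val_fin_one] <;>
    ring

theorem lorentz_svd_general
    (X Y Z T : ℝ)
    (h1 : X - T > |Z - Y|)
    (h2 : X + T > |Z + Y|)
    (h3 : X * T - Z * Y > 0) :
    ∃ K L t s : ℝ,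
      !![X, Y; Z, T] =
        !![Real.cosh t, Real.sinh t; Real.sinh t, Real.cosh t] * !![K, 0; 0, L] *
          !![Real.cosh s, Real.sinh s; Real.sinh s, Real.cosh s] ∧
      K - L = Real.sqrt ((X - T) ^ 2 - (Z - Y) ^ 2) ∧ K > L ∧ L > 0 := by
  obtain ⟨u, hXT, hZY⟩ := exists_eq_mul_cosh_and_eq_mul_sinh h2
  obtain ⟨v, hXT', hZY'⟩ := exists_eq_mul_cosh_and_eq_mul_sinh h1
  set A := √((X + T) ^ 2 - (Z + Y) ^ 2)
  set B := √((X - T) ^ 2 - (Z - Y) ^ 2)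
  have hpos : 0 < (X - T) ^ 2 - (Z - Y) ^ 2 :=
    sub_pos.mpr <| sq_lt_sq.mpr (h1.trans_le (le_abs_self _))
  have hB : 0 < B := sqrt_pos.mpr hpos
  have hBA : B < A := sqrt_lt_sqrt hpos.le (by linear_combination 4 * h3)
  refine ⟨(A + B) / 2, (A - B) / 2, (u + v) / 2, (u - v) / 2, ?_, by ring, by linarith,
    by linarith⟩
  rw [hyperbolicRotation_mul_diagonal_mul_hyperbolicRotation,
    show (u + v) / 2 + (u - v) / 2 = u by ring, show (u + v) / 2 - (u - v) / 2 = v by ring,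
    show (A + B) / 2 + (A - B) / 2 = A by ring, show (A + B) / 2 - (A - B) / 2 = B by ring,
    ← hXT, ← hZY, ← hXT', ← hZY']
  ext i j
  fin_cases i <;> fin_cases j <;> simp

/-- Lorentz singular value decomposition of a 2×2 matrix satisfying the stated inequalities. -/
theorem lorentz_svd
    (X Y Z T : ℝ)
    (h1 : X - T > |Z - Y|) (h1' : |Z - Y| > 0)
    (h2 : X + T > |Z + Y|) (h2' : |Z + Y| > 0)
    (h3 : X * T - Z * Y > 0) :
    ∃ K L t s : ℝ,
      !![X, Y; Z, T] =
        !![Real.cosh t, Real.sinh t; Real.sinh t, Real.cosh t] * !![K, 0; 0, L] *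
          !![Real.cosh s, Real.sinh s; Real.sinh s, Real.cosh s] ∧
      K - L = Real.sqrt ((X - T) ^ 2 - (Z - Y) ^ 2) ∧ K > L ∧ L > 0 :=
  lorentz_svd_general X Y Z T h1 h2 h3
end

section
/- The matrix [[0,1],[1,0]] admits no Lorentz singular value decomposition: there exist no reals K, L, t, s with [[0,1],[1,0]] = [[cosh t, sinh t],[sinh t, cosh t]] * [[K,0],[0,L]] * [[cosh s, sinh s],[sinh s, cosh s]]. -/
/-!
Writing `J = [[0,1],[1,0]]`, every hyperbolic rotation is `H_x = cosh x • 1 + sinh x • J`, so `J`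
commutes with all of them and `H_a H_b = H_(a+b)`. Hence `J = H_t D H_s` forces
`D = H_(-t) J H_(-s) = H_(-(t+s)) J`, whose off-diagonal entry `cosh (t+s)` is never zero.
-/

open Real Matrix

noncomputable def lorentzBoost (x : ℝ) : Matrix (Fin 2) (Fin 2) ℝ :=
  !![cosh x, sinh x; sinh x, cosh x]

lemma lorentzBoost_mul_lorentzBoost (x y : ℝ) :
    lorentzBoost x * lorentzBoost y = lorentzBoost (x + y) := by
  ext i j
  fin_cases i <;> fin_cases j <;>
    simp [lorentzBoost, mul_apply, cosh_add, sinh_add] <;> ring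

lemma lorentzBoost_zero : lorentzBoost 0 = 1 := by
  rw [lorentzBoost, cosh_zero, sinh_zero, one_fin_two]

lemma lorentzBoost_neg_mul_self (x : ℝ) : lorentzBoost (-x) * lorentzBoost x = 1 := by
  rw [lorentzBoost_mul_lorentzBoost, neg_add_cancel, lorentzBoost_zero]

lemma lorentzBoost_mul_neg_self (x : ℝ) : lorentzBoost x * lorentzBoost (-x) = 1 := by
  rw [lorentzBoost_mul_lorentzBoost, add_neg_cancel, lorentzBoost_zero]

lemma commute_swap_lorentzBoost (x : ℝ) :
    Commute (!![0, 1; 1, 0] : Matrix (Fin 2) (Fin 2) ℝ) (lorentzBoost x) := by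
  ext i j
  fin_cases i <;> fin_cases j <;> simp [lorentzBoost, mul_apply]

lemma lorentzBoost_neg_mul_mul_lorentzBoost_neg (t s : ℝ) (D : Matrix (Fin 2) (Fin 2) ℝ) :
    lorentzBoost (-t) * (lorentzBoost t * D * lorentzBoost s) * lorentzBoost (-s) = D := by
  simp only [← mul_assoc, lorentzBoost_neg_mul_self, one_mul]
  rw [mul_assoc, lorentzBoost_mul_neg_self, mul_one]

lemma lorentzBoost_mul_swap_apply_zero_one (x : ℝ) :
    (lorentzBoost x * !![0, 1; 1, 0] : Matrix (Fin 2) (Fin 2) ℝ) 0 1 = cosh x := by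
  simp [lorentzBoost, mul_apply]

/-- The matrix `[[0,1],[1,0]]` admits no Lorentz singular value decomposition. -/
theorem no_lorentz_svd_of_swap :
    ¬ ∃ K L t s : ℝ,
      (!![0, 1; 1, 0] : Matrix (Fin 2) (Fin 2) ℝ) =
        !![Real.cosh t, Real.sinh t; Real.sinh t, Real.cosh t] * !![K, 0; 0, L] *
          !![Real.cosh s, Real.sinh s; Real.sinh s, Real.cosh s] := by
  rintro ⟨K, L, t, s, h⟩
  set J : Matrix (Fin 2) (Fin 2) ℝ := !![0, 1; 1, 0]
  change J = lorentzBoost t * !![K, 0; 0, L] * lorentzBoost s at h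
  have hD : !![K, 0; 0, L] = lorentzBoost (-t + -s) * J := calc
    !![K, 0; 0, L] = lorentzBoost (-t) * J * lorentzBoost (-s) := by
      rw [h, lorentzBoost_neg_mul_mul_lorentzBoost_neg]
    _ = lorentzBoost (-t + -s) * J := by
      rw [mul_assoc, (commute_swap_lorentzBoost _).eq, ← mul_assoc, lorentzBoost_mul_lorentzBoost]
  have h01 := congrFun (congrFun hD 0) 1
  rw [lorentzBoost_mul_swap_apply_zero_one] at h01
  exact (cosh_pos _).ne (by simpa using h01)
end

section
/- Let n >= 3 and let U, V be invertible n x n real matrices whose first rows contain only positive entries. Let M = diag(m_1, -m_2, ..., -m_n) with all m_i > 0. If all diagonal entries of U^T M U and of V^T M V are zero, and U^T V is a diagonal matrix with all diagonal entries positive, then Tr(M) >= 0, i.e., m_1 >= m_2 + ... + m_n. -/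
/-!
The columns `uᵢ` of `U` and `vᵢ` of `V` are null vectors with positive time coordinate for the
Lorentzian form `⟨x, y⟩ = m₁x₁y₁ - ∑_{j ≥ 2} mⱼxⱼyⱼ` of `M`, so the reverse Cauchy–Schwarz
inequality gives `⟨uᵢ, vᵢ⟩ ≥ 0`. Since `UᵀV = diag(c)` with `c > 0`, `V diag(c)⁻¹ Uᵀ = 1`, hence
`Tr M = Tr (Uᵀ M V diag(c)⁻¹) = ∑ᵢ ⟨uᵢ, vᵢ⟩ / cᵢ ≥ 0`.
-/

open Matrix Finset

namespace Matrix

variable {l n p R : Type*} [Fintype n] [DecidableEq n]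

theorem transpose_mul_diagonal_mul_apply [CommSemiring R] (A : Matrix n l R) (B : Matrix n p R)
    (d : n → R) (i : l) (k : p) : (Aᵀ * diagonal d * B) i k = ∑ j, d j * (A j i * B j k) := by
  rw [mul_apply]
  simp only [mul_diagonal, transpose_apply]
  exact sum_congr rfl fun j _ => by ring

theorem trace_eq_sum_div_of_transpose_mul_eq_diagonal [Field R] {U V : Matrix n n R}
    {c : n → R} (hc : ∀ i, c i ≠ 0) (hUV : Uᵀ * V = diagonal c) (M : Matrix n n R) :
    M.trace = ∑ i, (Uᵀ * M * V) i i / c i := by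
  have hinv : V * diagonal c⁻¹ * Uᵀ = 1 := by
    refine mul_eq_one_comm.1 ?_
    rw [← Matrix.mul_assoc, hUV, diagonal_mul_diagonal, ← diagonal_one]
    exact congrArg diagonal (funext fun i => mul_inv_cancel₀ (hc i))
  calc M.trace = (M * (V * diagonal c⁻¹ * Uᵀ)).trace := by rw [hinv, Matrix.mul_one]
    _ = (Uᵀ * M * V * diagonal c⁻¹).trace := by
      rw [← Matrix.mul_assoc, ← Matrix.mul_assoc, trace_mul_comm]
      simp only [Matrix.mul_assoc]
    _ = ∑ i, (Uᵀ * M * V) i i / c i := by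
      simp only [trace, diag, mul_diagonal, Pi.inv_apply, div_eq_mul_inv]

end Matrix

section MinkowskiForm

variable {ι : Type*} [Fintype ι] [DecidableEq ι] (i₀ : ι) (m : ι → ℝ)

def minkowskiForm (u v : ι → ℝ) : ℝ :=
  m i₀ * (u i₀ * v i₀) - ∑ j ∈ univ.erase i₀, m j * (u j * v j)

theorem sum_signed_mul_eq_minkowskiForm (u v : ι → ℝ) :
    ∑ j, (if j = i₀ then m j else -(m j)) * (u j * v j) = minkowskiForm i₀ m u v := by
  rw [← add_sum_erase _ _ (mem_univ i₀), if_pos rfl, minkowskiForm, sub_eq_add_neg,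
    ← sum_neg_distrib]
  refine congrArg _ (sum_congr rfl fun j hj => ?_)
  rw [if_neg (ne_of_mem_erase hj), neg_mul]

variable {m} in
/-- Reverse Cauchy–Schwarz inequality for null vectors in the same time cone. -/
theorem minkowskiForm_nonneg_of_isotropic (hm : ∀ i, 0 ≤ m i) {u v : ι → ℝ}
    (hu₀ : 0 ≤ u i₀) (hv₀ : 0 ≤ v i₀)
    (hu : minkowskiForm i₀ m u u = 0) (hv : minkowskiForm i₀ m v v = 0) :
    0 ≤ minkowskiForm i₀ m u v := by
  rw [minkowskiForm, sub_eq_zero] at hu hv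
  rw [minkowskiForm, sub_nonneg]
  refine le_of_sq_le_sq ?_ (mul_nonneg (hm i₀) (mul_nonneg hu₀ hv₀))
  calc (∑ j ∈ univ.erase i₀, m j * (u j * v j)) ^ 2
      ≤ (∑ j ∈ univ.erase i₀, m j * (u j * u j)) * ∑ j ∈ univ.erase i₀, m j * (v j * v j) :=
        sum_sq_le_sum_mul_sum_of_sq_le_mul _ (fun j _ => mul_nonneg (hm j) (mul_self_nonneg _))
          (fun j _ => mul_nonneg (hm j) (mul_self_nonneg _)) (fun j _ => by ring_nf; rfl)
    _ = (m i₀ * (u i₀ * v i₀)) ^ 2 := by rw [← hu, ← hv]; ring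

end MinkowskiForm

theorem trace_nonneg_of_polar_general
    (n : ℕ) (hn0 : NeZero n)
    (U V : Matrix (Fin n) (Fin n) ℝ)
    (hUrow : ∀ j, 0 < U 0 j) (hVrow : ∀ j, 0 < V 0 j)
    (m : Fin n → ℝ) (hm : ∀ i, 0 < m i)
    (M : Matrix (Fin n) (Fin n) ℝ)
    (hM : M = Matrix.diagonal (fun i => if i = 0 then m i else -(m i)))
    (hUdiag : ∀ i, (Uᵀ * M * U) i i = 0)
    (hVdiag : ∀ i, (Vᵀ * M * V) i i = 0)
    (hUV : (Uᵀ * V).IsDiag) (hUVpos : ∀ i, 0 < (Uᵀ * V) i i) :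
    0 ≤ M.trace ∧ ∑ i ∈ Finset.univ.erase 0, m i ≤ m 0 := by
  have hform : ∀ (A B : Matrix (Fin n) (Fin n) ℝ) i,
      (Aᵀ * M * B) i i = minkowskiForm 0 m (fun j => A j i) (fun j => B j i) := fun A B i => by
    rw [hM, transpose_mul_diagonal_mul_apply, sum_signed_mul_eq_minkowskiForm]
  have htrace : M.trace = minkowskiForm 0 m 1 1 := by
    rw [hM, trace_diagonal, ← sum_signed_mul_eq_minkowskiForm]
    simp only [Pi.one_apply, mul_one]
  have hnonneg : 0 ≤ M.trace := by
    rw [trace_eq_sum_div_of_transpose_mul_eq_diagonal (fun i => (hUVpos i).ne')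
      hUV.diagonal_diag.symm]
    refine sum_nonneg fun i _ => div_nonneg ?_ (hUVpos i).le
    rw [hform]
    exact minkowskiForm_nonneg_of_isotropic 0 (fun i => (hm i).le) (hUrow i).le (hVrow i).le
      (by rw [← hform, hUdiag]) (by rw [← hform, hVdiag])
  refine ⟨hnonneg, ?_⟩
  simpa only [htrace, minkowskiForm, sub_nonneg, Pi.one_apply, mul_one] using hnonneg

/-- Key trace lemma: with `M = diag(m₁, -m₂, …, -mₙ)`, `mᵢ > 0`, if `UᵀMU` and `VᵀMV` have zero
diagonals, `U, V` are invertible with positive first rows, and `UᵀV` is diagonal with positive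
diagonal, then `Tr M ≥ 0`, i.e. `m₁ ≥ m₂ + ⋯ + mₙ`. -/
theorem trace_nonneg_of_polar
    (n : ℕ) (hn : 3 ≤ n) (hn0 : NeZero n)
    (U V : Matrix (Fin n) (Fin n) ℝ)
    (hU : IsUnit U.det) (hV : IsUnit V.det)
    (hUrow : ∀ j, 0 < U 0 j) (hVrow : ∀ j, 0 < V 0 j)
    (m : Fin n → ℝ) (hm : ∀ i, 0 < m i)
    (M : Matrix (Fin n) (Fin n) ℝ)
    (hM : M = Matrix.diagonal (fun i => if i = 0 then m i else -(m i)))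
    (hUdiag : ∀ i, (Uᵀ * M * U) i i = 0)
    (hVdiag : ∀ i, (Vᵀ * M * V) i i = 0)
    (hUV : (Uᵀ * V).IsDiag) (hUVpos : ∀ i, 0 < (Uᵀ * V) i i) :
    0 ≤ M.trace ∧ ∑ i ∈ Finset.univ.erase 0, m i ≤ m 0 :=
  trace_nonneg_of_polar_general n hn0 U V hUrow hVrow m hm M hM hUdiag hVdiag hUV hUVpos
end

section
/- If 0 < α, β, γ < π/2 and β + γ > α + π/2, then with b = tan β, c = tan γ: bc > 1 and (bc - 1) cos α > (b + c) sin α. -/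
open Real

/-! Clearing the denominators `cos β cos γ > 0`, the difference of the two sides of the second
inequality is `-cos (β + γ - α)`, and `π / 2 < β + γ - α < π`. The first inequality is the case
`α = 0` of the same identity. -/

theorem tan_mul_tan_sub_one_mul_cos_sub_add_mul_sin {α β γ : ℝ} (hβ : cos β ≠ 0)
    (hγ : cos γ ≠ 0) :
    (tan β * tan γ - 1) * cos α - (tan β + tan γ) * sin α
      = -cos (β + γ - α) / (cos β * cos γ) := by
  rw [tan_eq_sin_div_cos, tan_eq_sin_div_cos, cos_sub, cos_add, sin_add]
  field_simp
  ring

theorem add_mul_sin_lt_tan_mul_tan_sub_one_mul_cos {α β γ : ℝ} (hβ : 0 < cos β)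
    (hγ : 0 < cos γ) (h : cos (β + γ - α) < 0) :
    (tan β + tan γ) * sin α < (tan β * tan γ - 1) * cos α := by
  rw [← sub_pos, tan_mul_tan_sub_one_mul_cos_sub_add_mul_sin hβ.ne' hγ.ne']
  exact div_pos (neg_pos.mpr h) (mul_pos hβ hγ)

theorem tan_inequalities_of_angle_sum_general
    (α β γ : ℝ)
    (hα0 : 0 < α)
    (hβ : β < π / 2)
    (hγ : γ < π / 2)
    (hsum : β + γ > α + π / 2) :
    1 < Real.tan β * Real.tan γ ∧
    (Real.tan β * Real.tan γ - 1) * Real.cos α > (Real.tan β + Real.tan γ) * Real.sin α := by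
  have hcos_β : 0 < cos β := cos_pos_of_mem_Ioo ⟨by linarith [pi_pos], hβ⟩
  have hcos_γ : 0 < cos γ := cos_pos_of_mem_Ioo ⟨by linarith [pi_pos], hγ⟩
  have hcos_sum_sub (θ : ℝ) (hθ0 : 0 ≤ θ) (hθ : θ ≤ α) : cos (β + γ - θ) < 0 :=
    cos_neg_of_pi_div_two_lt_of_lt (by linarith) (by linarith [pi_pos])
  constructor
  · simpa using add_mul_sin_lt_tan_mul_tan_sub_one_mul_cos hcos_β hcos_γ
      (hcos_sum_sub 0 le_rfl hα0.le)
  · exact add_mul_sin_lt_tan_mul_tan_sub_one_mul_cos hcos_β hcos_γ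
      (hcos_sum_sub α hα0.le le_rfl)

/-- If `0 < α, β, γ < π/2` and `β + γ > α + π/2`, then with `b = tan β`, `c = tan γ`:
`bc > 1` and `(bc - 1) cos α > (b + c) sin α`. -/
theorem tan_inequalities_of_angle_sum
    (α β γ : ℝ)
    (hα0 : 0 < α) (hα : α < π / 2)
    (hβ0 : 0 < β) (hβ : β < π / 2)
    (hγ0 : 0 < γ) (hγ : γ < π / 2)
    (hsum : β + γ > α + π / 2) :
    1 < Real.tan β * Real.tan γ ∧
    (Real.tan β * Real.tan γ - 1) * Real.cos α > (Real.tan β + Real.tan γ) * Real.sin α :=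
  tan_inequalities_of_angle_sum_general α β γ hα0 hβ hγ hsum
end
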